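/- arXiv:1911.07945 — 2 statements merged into one kernel-verified Lean document; each statement's English description precedes it below -/
import Mathlib

section
/- In the setup below, the following two deterministic claims hold. (a) Let 1 ≤ j ≤ j* − 2 and suppose the coin flips are such that X_{ι(ℓ)} = Y_{ι(ℓ)} for every ℓ ≤ j and X_{ι(j+1)} = Z_{ι(j+1)}. Then max_i X̃_i = W_{j+1}, and for every arrival order π the gambler's reward is at least W_j. (b) Suppose X_{ι(ℓ)} = Y_{ι(ℓ)} for every ℓ ≤ j* − 1. Then max_i X̃_i = W_{j*}, and for every arrival order π the gambler's reward is at least W_{j*−1}. -/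
/-!
Below the pivotal index `j*` every `W ℓ` is the larger value `Y` of its pair, and `W j*` is the
largest `Z`. Suppose the coins of the pairs of `W 1, …, W s` are heads (with `s < j*`) and
`W (s + 1)` is a value of `X̃`. Every value of `X̃` is then either a `Z`, hence at most
`W j* ≤ W (s + 1)`, or the `Y` of a tails pair, which sits beyond position `s`; so the threshold
is `W (s + 1)`. The value `X (ι 1) = W 1` clears it, so the gambler stops, and any value above
`W (s + 1)` is at least `W s`. Case (a) is `s = j`, where `W (j + 1)` is the `Y` of a tails pair;
case (b) is `s = j* - 1`, where `W j*` is the `Z` of a heads pair.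
-/

/-- Maximum of a function on `Fin n`, for `n > 0`. -/
noncomputable def finMax {n : ℕ} (hn : 0 < n) (f : Fin n → ℝ) : ℝ :=
  Finset.univ.sup' (Finset.univ_nonempty_iff.mpr (Fin.pos_iff_nonempty.mp hn)) f

/-- The gambler's reward when the values `X` arrive in the order given by the
permutation `π` and the gambler accepts the first arriving value strictly
exceeding the threshold `max_i X̃ i` (reward `0` if no value does). -/
noncomputable def gamblerReward {n : ℕ} (hn : 0 < n) (π : Equiv.Perm (Fin n))
    (X Xt : Fin n → ℝ) : ℝ :=
  if h : (Finset.univ.filter (fun k => finMax hn Xt < X (π k))).Nonempty then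
    X (π ((Finset.univ.filter (fun k => finMax hn Xt < X (π k))).min' h))
  else 0

open Finset

lemma finMax_eq_of_forall_le {n : ℕ} (hn : 0 < n) {f : Fin n → ℝ} {T : ℝ}
    (hle : ∀ i, f i ≤ T) {i₀ : Fin n} (h₀ : f i₀ = T) : finMax hn f = T :=
  le_antisymm (sup'_le _ _ fun i _ => hle i) (h₀ ▸ le_sup' f (mem_univ i₀))

lemma le_gamblerReward {n : ℕ} (hn : 0 < n) (π : Equiv.Perm (Fin n)) {X Xt : Fin n → ℝ} {b : ℝ}
    {i₀ : Fin n} (h₀ : finMax hn Xt < X i₀) (hb : ∀ i, finMax hn Xt < X i → b ≤ X i) :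
    b ≤ gamblerReward hn π X Xt := by
  have hne : (univ.filter fun k => finMax hn Xt < X (π k)).Nonempty :=
    ⟨π.symm i₀, by simpa using h₀⟩
  rw [gamblerReward, dif_pos hne]
  exact hb _ (mem_filter.mp (min'_mem _ hne)).2

lemma Bool.eq_true_of_ite_eq_left {α : Type*} {c : Bool} {a b : α} (hab : b ≠ a)
    (h : (if c then a else b) = a) : c = true := by
  cases c <;> simp_all

lemma Bool.eq_false_of_ite_eq_right {α : Type*} {c : Bool} {a b : α} (hab : a ≠ b)
    (h : (if c then a else b) = b) : c = false := by
  cases c <;> simp_all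

section SortedPairs

variable {n : ℕ} {Y Z : Fin n → ℝ} {W : ℕ → ℝ} {ι : ℕ → Fin n} {jstar : ℕ}

lemma exists_W_eq (hWrange : (Icc 1 (2 * n)).image W = univ.image Y ∪ univ.image Z) {v : ℝ}
    (hv : v ∈ univ.image Y ∪ univ.image Z) : ∃ m ∈ Icc 1 (2 * n), W m = v := by
  rwa [← hWrange, mem_image] at hv

lemma W_le_of_W_succ_lt (hWanti : StrictAntiOn W (Set.Icc 1 (2 * n)))
    (hWrange : (Icc 1 (2 * n)).image W = univ.image Y ∪ univ.image Z) {s : ℕ}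
    (hs : s ∈ Set.Icc 1 (2 * n)) {v : ℝ} (hv : v ∈ univ.image Y ∪ univ.image Z)
    (hlt : W (s + 1) < v) : W s ≤ v := by
  obtain ⟨m, hm, rfl⟩ := exists_W_eq hWrange hv
  rw [mem_Icc] at hm
  by_cases hms : m ≤ s
  · exact (hWanti.le_iff_ge hs hm).mpr hms
  · exact absurd hlt ((hWanti.le_iff_ge hm ⟨by omega, by omega⟩).mpr (by omega)).not_gt

lemma ι_eq_of_W_eq_Y (hdistinct : Function.Injective (Sum.elim Y Z))
    (hι : ∀ j ∈ Icc 1 (2 * n), W j = Y (ι j) ∨ W j = Z (ι j)) {m : ℕ}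
    (hm : m ∈ Icc 1 (2 * n)) {i : Fin n} (h : W m = Y i) : ι m = i := by
  rcases hι m hm with h' | h'
  · exact Sum.inl_injective (hdistinct (a₁ := .inl (ι m)) (a₂ := .inl i) (h'.symm.trans h))
  · exact absurd (hdistinct (a₁ := .inl i) (a₂ := .inr (ι m)) (h.symm.trans h')) Sum.inl_ne_inr

structure IsPivotalRanking (Y Z : Fin n → ℝ) (W : ℕ → ℝ) (ι : ℕ → Fin n) (jstar : ℕ) : Prop where
  injective : Function.Injective (Sum.elim Y Z)
  lt : ∀ i, Z i < Y i
  strictAntiOn : StrictAntiOn W (Set.Icc 1 (2 * n))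
  image_eq : (Icc 1 (2 * n)).image W = univ.image Y ∪ univ.image Z
  pair : ∀ j ∈ Icc 1 (2 * n), W j = Y (ι j) ∨ W j = Z (ι j)
  isLeast : IsLeast {j : ℕ | j ∈ Icc 1 (2 * n) ∧ ∃ ℓ, 1 ≤ ℓ ∧ ℓ < j ∧ ι ℓ = ι j} jstar

namespace IsPivotalRanking

variable (h : IsPivotalRanking Y Z W ι jstar)
include h

lemma pivot_mem : jstar ∈ Icc 1 (2 * n) := h.isLeast.1.1

lemma W_eq_Y_of_lt_pivot {m : ℕ} (hm : 1 ≤ m) (hmj : m < jstar) : W m = Y (ι m) := by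
  have hm2 : m ≤ 2 * n := by have := mem_Icc.mp h.pivot_mem; omega
  refine (h.pair m (mem_Icc.mpr ⟨hm, hm2⟩)).resolve_right fun hZ => ?_
  obtain ⟨ℓ, hℓ, hWℓ⟩ := exists_W_eq h.image_eq (v := Y (ι m)) (by simp)
  have hℓm : ℓ < m := (h.strictAntiOn.lt_iff_gt ⟨hm, hm2⟩ (mem_Icc.mp hℓ)).mp
    (hZ ▸ hWℓ ▸ h.lt (ι m))
  have := h.isLeast.2 ⟨mem_Icc.mpr ⟨hm, hm2⟩, ℓ, (mem_Icc.mp hℓ).1, hℓm,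
    ι_eq_of_W_eq_Y h.injective h.pair hℓ hWℓ⟩
  omega

lemma W_pivot_eq_Z : W jstar = Z (ι jstar) := by
  obtain ⟨⟨hj, ℓ, hℓ, hℓj, hιℓ⟩, -⟩ := h.isLeast
  refine (h.pair jstar hj).resolve_left fun hY => ?_
  have := (h.strictAntiOn.lt_iff_gt (mem_Icc.mp hj)
    ⟨hℓ, by have := (mem_Icc.mp hj).2; omega⟩).mpr hℓj
  rw [hY, h.W_eq_Y_of_lt_pivot hℓ hℓj, hιℓ] at this
  exact this.false

lemma Z_le_W_pivot (k : Fin n) : Z k ≤ W jstar := by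
  obtain ⟨m, hm, hWm⟩ := exists_W_eq h.image_eq (v := Z k) (by simp)
  rw [← hWm, h.strictAntiOn.le_iff_ge (mem_Icc.mp hm) (mem_Icc.mp h.pivot_mem)]
  by_contra! hmj
  have hY := h.W_eq_Y_of_lt_pivot (mem_Icc.mp hm).1 hmj
  exact Sum.inl_ne_inr (h.injective (a₁ := .inl (ι m)) (a₂ := .inr k) (hY.symm.trans hWm))

lemma finMax_eq_W_succ (hn : 0 < n) {C : Fin n → Bool} {s : ℕ} (hsj : s + 1 ≤ jstar)
    (hheads : ∀ ℓ, 1 ≤ ℓ → ℓ ≤ s → C (ι ℓ) = true) {i₀ : Fin n}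
    (h₀ : (if C i₀ then Z i₀ else Y i₀) = W (s + 1)) :
    finMax hn (fun i => if C i then Z i else Y i) = W (s + 1) := by
  have hj := mem_Icc.mp h.pivot_mem
  refine finMax_eq_of_forall_le hn (fun i => ?_) h₀
  cases hC : C i
  · obtain ⟨m, hm, hWm⟩ := exists_W_eq h.image_eq (v := Y i) (by simp)
    have hsm : s + 1 ≤ m := by
      by_contra! hms
      rw [← ι_eq_of_W_eq_Y h.injective h.pair hm hWm, hheads m (mem_Icc.mp hm).1 (by omega)] at hC
      exact Bool.noConfusion hC
    simpa [← hWm] using (h.strictAntiOn.le_iff_ge (mem_Icc.mp hm)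
      ⟨by omega, by omega⟩).mpr hsm
  · simpa using (h.Z_le_W_pivot i).trans
      ((h.strictAntiOn.le_iff_ge ⟨by omega, by omega⟩ ⟨by omega, by omega⟩).mpr hsj)

lemma W_le_gamblerReward (hn : 0 < n) (π : Equiv.Perm (Fin n)) {C : Fin n → Bool} {s : ℕ}
    (hs : 1 ≤ s) (hsj : s + 1 ≤ jstar) (hheads : ∀ ℓ, 1 ≤ ℓ → ℓ ≤ s → C (ι ℓ) = true)
    (hmax : finMax hn (fun i => if C i then Z i else Y i) = W (s + 1)) :
    W s ≤ gamblerReward hn π (fun i => if C i then Y i else Z i)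
      (fun i => if C i then Z i else Y i) := by
  have hj := mem_Icc.mp h.pivot_mem
  refine le_gamblerReward hn π (i₀ := ι 1) ?_ fun i hi => ?_
  · rw [hmax, hheads 1 le_rfl hs, if_pos rfl, ← h.W_eq_Y_of_lt_pivot le_rfl (by omega)]
    exact h.strictAntiOn ⟨le_rfl, by omega⟩ ⟨by omega, by omega⟩ (by omega)
  · refine W_le_of_W_succ_lt h.strictAntiOn h.image_eq ⟨hs, by omega⟩ ?_ (hmax ▸ hi)
    cases C i <;> simp

end IsPivotalRanking

end SortedPairs

theorem gambler_deterministic_cases_general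
    -- the `2n` values: `Y i > Z i ≥ 0` for each pair `i`, all distinct
    (n : ℕ) (hn : 0 < n) (Y Z : Fin n → ℝ)
    (hYZ : ∀ i, Z i < Y i)
    (hdistinct : Function.Injective (Sum.elim Y Z))
    -- `W 1 > W 2 > … > W (2n)` is the decreasing relabeling of the `2n` values
    (W : ℕ → ℝ) (hWanti : StrictAntiOn W (Set.Icc 1 (2 * n)))
    (hWrange : (Finset.Icc 1 (2 * n)).image W
      = Finset.univ.image Y ∪ Finset.univ.image Z)
    -- `ι j` is the index of the pair containing `W j`
    (ι : ℕ → Fin n)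
    (hι : ∀ j ∈ Finset.Icc 1 (2 * n), W j = Y (ι j) ∨ W j = Z (ι j))
    -- `jstar` is the pivotal index: the least `j` whose pair index repeats an earlier one
    (jstar : ℕ)
    (hjstar : IsLeast {j : ℕ | j ∈ Finset.Icc 1 (2 * n)
      ∧ ∃ ℓ, 1 ≤ ℓ ∧ ℓ < j ∧ ι ℓ = ι j} jstar)
    (C : Fin n → Bool) :
    (∀ j, 1 ≤ j → j ≤ jstar - 2 →
      (∀ ℓ, 1 ≤ ℓ → ℓ ≤ j →
        (if C (ι ℓ) then Y (ι ℓ) else Z (ι ℓ)) = Y (ι ℓ)) →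
      (if C (ι (j + 1)) then Y (ι (j + 1)) else Z (ι (j + 1)))
          = Z (ι (j + 1)) →
      finMax hn (fun i => if C i then Z i else Y i) = W (j + 1)
        ∧ ∀ π : Equiv.Perm (Fin n),
            W j ≤ gamblerReward hn π (fun i => if C i then Y i else Z i)
              (fun i => if C i then Z i else Y i))
    ∧ ((∀ ℓ, 1 ≤ ℓ → ℓ ≤ jstar - 1 →
        (if C (ι ℓ) then Y (ι ℓ) else Z (ι ℓ)) = Y (ι ℓ)) →
      finMax hn (fun i => if C i then Z i else Y i) = W jstar
        ∧ ∀ π : Equiv.Perm (Fin n),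
            W (jstar - 1) ≤ gamblerReward hn π
              (fun i => if C i then Y i else Z i)
              (fun i => if C i then Z i else Y i)) := by
  have h : IsPivotalRanking Y Z W ι jstar := ⟨hdistinct, hYZ, hWanti, hWrange, hι, hjstar⟩
  have heads {s : ℕ} (hY : ∀ ℓ, 1 ≤ ℓ → ℓ ≤ s →
      (if C (ι ℓ) then Y (ι ℓ) else Z (ι ℓ)) = Y (ι ℓ)) :
      ∀ ℓ, 1 ≤ ℓ → ℓ ≤ s → C (ι ℓ) = true := fun ℓ h1 h2 =>
    Bool.eq_true_of_ite_eq_left (hYZ _).ne (hY ℓ h1 h2)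
  obtain ⟨⟨hj, ℓ₀, hℓ₀, hℓ₀j, hιℓ₀⟩, -⟩ := hjstar
  refine ⟨fun j hj1 hjj hY hZ => ?_, fun hY => ?_⟩
  · have hmax := h.finMax_eq_W_succ hn (by omega) (heads hY) (i₀ := ι (j + 1)) <| by
      rw [Bool.eq_false_of_ite_eq_right (hYZ _).ne' hZ]
      exact (h.W_eq_Y_of_lt_pivot (by omega) (by omega)).symm
    exact ⟨hmax, fun π => h.W_le_gamblerReward hn π hj1 (by omega) (heads hY) hmax⟩
  · obtain ⟨s, rfl⟩ : ∃ s, jstar = s + 1 := ⟨jstar - 1, by omega⟩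
    have hmax := h.finMax_eq_W_succ hn le_rfl (heads hY) (i₀ := ι (s + 1)) <| by
      rw [← hιℓ₀, heads hY ℓ₀ hℓ₀ (by omega), hιℓ₀]
      exact h.W_pivot_eq_Z.symm
    exact ⟨hmax, fun π => h.W_le_gamblerReward hn π (by omega) le_rfl (heads hY) hmax⟩

/-- **The two deterministic cases in the proof of Proposition 3.4.** With
`X i = Y i`, `X̃ i = Z i` if `C i` is heads and `X i = Z i`, `X̃ i = Y i`
otherwise:
(a) if `1 ≤ j ≤ jstar - 2`, the coins of the pairs of `W 1, …, W j` are heads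
and the coin of the pair of `W (j+1)` is tails, then `max_i X̃ i = W (j+1)` and
for every arrival order `π` the gambler's reward is at least `W j`;
(b) if the coins of the pairs of `W 1, …, W (jstar - 1)` are all heads, then
`max_i X̃ i = W jstar` and for every arrival order `π` the gambler's reward is
at least `W (jstar - 1)`. -/
theorem gambler_deterministic_cases
    -- the `2n` values: `Y i > Z i ≥ 0` for each pair `i`, all distinct
    (n : ℕ) (hn : 0 < n) (Y Z : Fin n → ℝ)
    (hZnonneg : ∀ i, 0 ≤ Z i) (hYZ : ∀ i, Z i < Y i)
    (hdistinct : Function.Injective (Sum.elim Y Z))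
    -- `W 1 > W 2 > … > W (2n)` is the decreasing relabeling of the `2n` values
    (W : ℕ → ℝ) (hWanti : StrictAntiOn W (Set.Icc 1 (2 * n)))
    (hWrange : (Finset.Icc 1 (2 * n)).image W
      = Finset.univ.image Y ∪ Finset.univ.image Z)
    -- `ι j` is the index of the pair containing `W j`
    (ι : ℕ → Fin n)
    (hι : ∀ j ∈ Finset.Icc 1 (2 * n), W j = Y (ι j) ∨ W j = Z (ι j))
    -- `jstar` is the pivotal index: the least `j` whose pair index repeats an earlier one
    (jstar : ℕ)
    (hjstar : IsLeast {j : ℕ | j ∈ Finset.Icc 1 (2 * n)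
      ∧ ∃ ℓ, 1 ≤ ℓ ∧ ℓ < j ∧ ι ℓ = ι j} jstar)
    (C : Fin n → Bool) :
    (∀ j, 1 ≤ j → j ≤ jstar - 2 →
      (∀ ℓ, 1 ≤ ℓ → ℓ ≤ j →
        (if C (ι ℓ) then Y (ι ℓ) else Z (ι ℓ)) = Y (ι ℓ)) →
      (if C (ι (j + 1)) then Y (ι (j + 1)) else Z (ι (j + 1)))
          = Z (ι (j + 1)) →
      finMax hn (fun i => if C i then Z i else Y i) = W (j + 1)
        ∧ ∀ π : Equiv.Perm (Fin n),
            W j ≤ gamblerReward hn π (fun i => if C i then Y i else Z i)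
              (fun i => if C i then Z i else Y i))
    ∧ ((∀ ℓ, 1 ≤ ℓ → ℓ ≤ jstar - 1 →
        (if C (ι ℓ) then Y (ι ℓ) else Z (ι ℓ)) = Y (ι ℓ)) →
      finMax hn (fun i => if C i then Z i else Y i) = W jstar
        ∧ ∀ π : Equiv.Perm (Fin n),
            W (jstar - 1) ≤ gamblerReward hn π
              (fun i => if C i then Y i else Z i)
              (fun i => if C i then Z i else Y i)) :=
  gambler_deterministic_cases_general n hn Y Z hYZ hdistinct W hWanti hWrange ι hι jstar hjstar C
end

section
/- In the setup below, for every arrival order π, the expected reward of the gambler over the randomness of the coin flips is at least one half of the expected value of max_i X_i over the randomness of the coin flips. -/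
/-!
Let `J` be the pivotal index, so that `W J = max_i Z i` and `W 1 > ⋯ > W (J - 1)` are the larger
values `Y` of `J - 1` distinct pairs. Both the prophet's value `max X` and the gambler's threshold
`max X̃` are always at least `W J`, so by the layer-cake formula it suffices to show, for each
`j ≤ J`, that `P(max X ≥ W j) ≤ 2 P(reward ≥ W j)`. When the top pair shows heads, `X` at that pair
is `W 1`, which beats the threshold, so the gambler accepts some value `W k` above the threshold.
For `j + 1 < J`, the prophet reaches `W j` only if one of the top `j` pairs shows heads
(probability `1 - 2⁻ʲ`), while the gambler does whenever the top pair shows heads and one of the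
next `j` pairs shows tails (probability `(1 - 2⁻ʲ) / 2`): that tail lifts the threshold to at least
`W (j + 1)`, and the accepted value `W k` then satisfies `k ≤ j`. For `j + 1 ≥ J` the threshold is
at least `W J ≥ W (j + 1)` anyway, and heads on the top pair (probability `1 / 2`) suffices.
-/

open Finset

section finMax

variable {n : ℕ} (hn : 0 < n)

theorem le_finMax (f : Fin n → ℝ) (i : Fin n) : f i ≤ finMax hn f :=
  le_sup' f (mem_univ i)

theorem finMax_lt_iff {f : Fin n → ℝ} {a : ℝ} : finMax hn f < a ↔ ∀ i, f i < a := by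
  simp [finMax, sup'_lt_iff]

theorem exists_finMax_eq (f : Fin n → ℝ) : ∃ i, finMax hn f = f i := by
  obtain ⟨i, -, hi⟩ := exists_mem_eq_sup' _ f
  exact ⟨i, hi⟩

variable (π : Equiv.Perm (Fin n)) {X Xt : Fin n → ℝ}

theorem finMax_lt_gamblerReward {i : Fin n} (hi : finMax hn Xt < X i) :
    finMax hn Xt < gamblerReward hn π X Xt := by
  have hne : ({k | finMax hn Xt < X (π k)} : Finset (Fin n)).Nonempty :=
    ⟨π.symm i, by simpa using hi⟩
  rw [gamblerReward, dif_pos hne]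
  exact (mem_filter.1 (min'_mem _ hne)).2

theorem exists_gamblerReward_eq {i : Fin n} (hi : finMax hn Xt < X i) :
    ∃ j, gamblerReward hn π X Xt = X j := by
  have hne : ({k | finMax hn Xt < X (π k)} : Finset (Fin n)).Nonempty :=
    ⟨π.symm i, by simpa using hi⟩
  rw [gamblerReward, dif_pos hne]
  exact ⟨_, rfl⟩

theorem gamblerReward_nonneg (h : 0 ≤ finMax hn Xt) : 0 ≤ gamblerReward hn π X Xt := by
  rw [gamblerReward]
  split_ifs with hne
  · exact h.trans (mem_filter.1 (min'_mem _ hne)).2.le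
  · exact le_rfl

end finMax

theorem card_filter_forall_eq_mul_pow {α β : Type*} [Fintype α] [DecidableEq α] [Fintype β]
    [DecidableEq β] (S : Finset α) (b : α → β) :
    #{C : α → β | ∀ a ∈ S, C a = b a} * Fintype.card β ^ #S = Fintype.card β ^ Fintype.card α := by
  have hpi : ({C : α → β | ∀ a ∈ S, C a = b a} : Finset (α → β)) =
      Fintype.piFinset fun a => if a ∈ S then {b a} else univ := by
    ext C
    simp only [mem_filter, mem_univ, true_and, Fintype.mem_piFinset]
    refine forall_congr' fun a => ?_
    split_ifs with ha <;> simp [ha]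
  rw [hpi, Fintype.card_piFinset]
  simp only [apply_ite Finset.card, card_singleton, card_univ]
  rw [prod_ite, prod_const_one, one_mul, prod_const, ← pow_add, filter_not, filter_mem_eq_inter,
    univ_inter, card_univ_sdiff, Nat.sub_add_cancel (card_le_univ S)]

theorem card_exists_true_eq_two_mul_card_true_and_exists_false {α : Type*} [Fintype α]
    [DecidableEq α] {S S' : Finset α} {a : α} (ha : a ∉ S') (hcard : #S = #S') :
    #{C : α → Bool | ∃ x ∈ S, C x = true}
      = 2 * #{C : α → Bool | C a = true ∧ ∃ x ∈ S', C x = false} := by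
  -- both sides equal `2 ^ card α - 2 ^ (card α - #S)`
  have hS := card_filter_forall_eq_mul_pow S fun _ => false
  have ha1 := card_filter_forall_eq_mul_pow {a} fun _ => true
  have haS' := card_filter_forall_eq_mul_pow (insert a S') fun _ => true
  rw [card_insert_of_notMem ha, ← hcard] at haS'
  simp only [Fintype.card_bool, card_singleton, mem_singleton, forall_eq, pow_one,
    forall_mem_insert] at hS ha1 haS'
  have hS_compl := card_filter_add_card_filter_not (s := univ)
    fun C : α → Bool => ∃ x ∈ S, C x = true
  have ha_split := card_filter_add_card_filter_not (s := {C : α → Bool | C a = true})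
    fun C => ∃ x ∈ S', C x = false
  simp only [filter_filter, not_exists, not_and, Bool.not_eq_true, Bool.not_eq_false]
    at hS_compl ha_split
  have hFB : #{C : α → Bool | ∀ x ∈ S, C x = false}
      = 2 * #{C : α → Bool | C a = true ∧ ∀ x ∈ S', C x = true} :=
    Nat.eq_of_mul_eq_mul_right (pow_pos two_pos #S) (by rw [hS, ← haS', pow_succ]; ring)
  rw [card_univ, Fintype.card_fun, Fintype.card_bool] at hS_compl
  omega

open MeasureTheory in
theorem sum_le_mul_sum_of_card_le_mul_card {Ω : Type*} [Fintype Ω] {f g : Ω → ℝ} {c : ℝ}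
    (hc : 0 ≤ c) (hf : ∀ x, 0 ≤ f x) (hg : ∀ x, 0 ≤ g x)
    (h : ∀ t, 0 < t → (#{x | t ≤ f x} : ℝ) ≤ c * #{x | t ≤ g x}) :
    ∑ x, f x ≤ c * ∑ x, g x := by
  classical
  let _ : MeasurableSpace Ω := ⊤
  have layer (u : Ω → ℝ) (hu : 0 ≤ u) : ENNReal.ofReal (∑ x, u x) =
      ∫⁻ t in Set.Ioi 0, (#{x | t ≤ u x} : ENNReal) := by
    rw [ENNReal.ofReal_sum_of_nonneg fun x _ => hu x,
      ← tsum_fintype (L := SummationFilter.unconditional _), ← lintegral_count,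
      lintegral_eq_lintegral_meas_le _ (Filter.Eventually.of_forall hu)
        Measurable.of_discrete.aemeasurable]
    congr! with t
    rw [← Measure.count_apply_finset]
    simp
  rw [← ENNReal.ofReal_le_ofReal_iff (mul_nonneg hc (sum_nonneg fun x _ => hg x)),
    ENNReal.ofReal_mul hc, layer f hf, layer g hg, ← lintegral_const_mul' _ _ ENNReal.ofReal_ne_top]
  refine setLIntegral_mono' measurableSet_Ioi fun t ht => ?_
  have := ENNReal.ofReal_le_ofReal (h t ht)
  rwa [ENNReal.ofReal_mul hc, ENNReal.ofReal_natCast, ENNReal.ofReal_natCast] at this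

theorem sum_le_mul_sum_of_card_le_mul_card_of_mem {Ω : Type*} [Fintype Ω] {f g : Ω → ℝ} {c : ℝ}
    (V : Finset ℝ) (hc : 0 ≤ c) (hf : ∀ x, 0 ≤ f x) (hg : ∀ x, 0 ≤ g x) (hfV : ∀ x, f x ∈ V)
    (h : ∀ v ∈ V, (#{x | v ≤ f x} : ℝ) ≤ c * #{x | v ≤ g x}) :
    ∑ x, f x ≤ c * ∑ x, g x := by
  refine sum_le_mul_sum_of_card_le_mul_card hc hf hg fun t ht => ?_
  by_cases hV : (V.filter (t ≤ ·)).Nonempty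
  · obtain ⟨hvV, htv⟩ := mem_filter.1 (min'_mem _ hV)
    have hlevel : univ.filter (t ≤ f ·) = univ.filter ((V.filter (t ≤ ·)).min' hV ≤ f ·) := by
      ext x
      simp only [mem_filter, mem_univ, true_and]
      exact ⟨fun hx => min'_le _ _ (mem_filter.2 ⟨hfV x, hx⟩), htv.trans⟩
    rw [hlevel]
    refine (h _ hvV).trans (mul_le_mul_of_nonneg_left ?_ hc)
    exact_mod_cast card_le_card (monotone_filter_right _ fun _ _ hx => htv.trans hx)
  · have hempty : univ.filter (t ≤ f ·) = ∅ :=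
      filter_eq_empty_iff.2 fun x _ hx => hV ⟨f x, mem_filter.2 ⟨hfV x, hx⟩⟩
    rw [hempty, card_empty, Nat.cast_zero]
    positivity

-- The gambler's values are `X = pick C Y Z` and the samples are `X̃ = pick C Z Y`.
def pick {α : Type*} (C : α → Bool) (Y Z : α → ℝ) (i : α) : ℝ := if C i then Y i else Z i

structure PivotalEnumeration {n : ℕ} (Y Z : Fin n → ℝ) (W : ℕ → ℝ) (ι : ℕ → Fin n) (J : ℕ) :
    Prop where
  Z_lt_Y : ∀ i, Z i < Y i
  injective : Function.Injective (Sum.elim Y Z)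
  strictAntiOn : StrictAntiOn W (Set.Icc 1 (2 * n))
  image_eq : (Icc 1 (2 * n)).image W = univ.image Y ∪ univ.image Z
  eq_or_eq : ∀ j ∈ Icc 1 (2 * n), W j = Y (ι j) ∨ W j = Z (ι j)
  isLeast : IsLeast {j : ℕ | j ∈ Icc 1 (2 * n) ∧ ∃ ℓ, 1 ≤ ℓ ∧ ℓ < j ∧ ι ℓ = ι j} J

namespace PivotalEnumeration

variable {n : ℕ} {Y Z : Fin n → ℝ} {W : ℕ → ℝ} {ι : ℕ → Fin n} {J : ℕ}

theorem Y_injective (h : PivotalEnumeration Y Z W ι J) : Function.Injective Y :=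
  h.injective.comp Sum.inl_injective

theorem Y_ne_Z (h : PivotalEnumeration Y Z W ι J) (i k : Fin n) : Y i ≠ Z k :=
  fun e => Sum.inl_ne_inr (h.injective e)

theorem one_lt (h : PivotalEnumeration Y Z W ι J) : 1 < J := by
  obtain ⟨-, ℓ, hℓ, hℓJ, -⟩ := h.isLeast.1
  omega

theorem le_two_mul (h : PivotalEnumeration Y Z W ι J) : J ≤ 2 * n :=
  (mem_Icc.1 h.isLeast.1.1).2

theorem mem_Icc_of_le (h : PivotalEnumeration Y Z W ι J) {k : ℕ} (hk : 1 ≤ k) (hkJ : k ≤ J) :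
    k ∈ Set.Icc 1 (2 * n) :=
  ⟨hk, hkJ.trans h.le_two_mul⟩

theorem exists_W_eq_Y (h : PivotalEnumeration Y Z W ι J) (i : Fin n) :
    ∃ k ∈ Set.Icc 1 (2 * n), W k = Y i := by
  have hmem : Y i ∈ (Icc 1 (2 * n)).image W := h.image_eq ▸ mem_union_left _ (by simp)
  obtain ⟨k, hk, e⟩ := mem_image.1 hmem
  exact ⟨k, mem_Icc.1 hk, e⟩

theorem exists_W_eq_Z (h : PivotalEnumeration Y Z W ι J) (i : Fin n) :
    ∃ k ∈ Set.Icc 1 (2 * n), W k = Z i := by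
  have hmem : Z i ∈ (Icc 1 (2 * n)).image W := h.image_eq ▸ mem_union_right _ (by simp)
  obtain ⟨k, hk, e⟩ := mem_image.1 hmem
  exact ⟨k, mem_Icc.1 hk, e⟩

theorem exists_W_eq_pick (h : PivotalEnumeration Y Z W ι J) (C : Fin n → Bool) (i : Fin n) :
    ∃ k ∈ Set.Icc 1 (2 * n), W k = pick C Y Z i := by
  unfold pick
  split
  exacts [h.exists_W_eq_Y i, h.exists_W_eq_Z i]

theorem pivot_le_of_lt (h : PivotalEnumeration Y Z W ι J) {k l : ℕ} (hk : 1 ≤ k) (hkl : k < l)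
    (hl : l ≤ 2 * n) (hιkl : ι k = ι l) : J ≤ l :=
  h.isLeast.2 ⟨mem_Icc.2 ⟨by omega, hl⟩, k, hk, hkl, hιkl⟩

theorem W_eq_Y (h : PivotalEnumeration Y Z W ι J) {k : ℕ} (hk : 1 ≤ k) (hkJ : k < J) :
    W k = Y (ι k) := by
  have hkmem := h.mem_Icc_of_le hk hkJ.le
  refine (h.eq_or_eq k (by simpa using hkmem)).resolve_right fun hZ => ?_
  obtain ⟨k', hk'mem, hk'⟩ := h.exists_W_eq_Y (ι k)
  have hk'k : k' < k := (h.strictAntiOn.lt_iff_gt hkmem hk'mem).1 (by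
    rw [hZ, hk']; exact h.Z_lt_Y _)
  rcases h.eq_or_eq k' (by simpa using hk'mem) with hY' | hZ'
  · have := h.pivot_le_of_lt hk'mem.1 hk'k hkmem.2 (h.Y_injective (hY'.symm.trans hk'))
    omega
  · exact h.Y_ne_Z _ _ (hk'.symm.trans hZ')

theorem injOn (h : PivotalEnumeration Y Z W ι J) : Set.InjOn ι (Set.Ico 1 J) := by
  intro k hk l hl hkl
  by_contra hne
  rcases Nat.lt_or_gt_of_ne hne with hlt | hlt
  · exact hl.2.not_ge (h.pivot_le_of_lt hk.1 hlt (hl.2.le.trans h.le_two_mul) hkl)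
  · exact hk.2.not_ge (h.pivot_le_of_lt hl.1 hlt (hk.2.le.trans h.le_two_mul) hkl.symm)

theorem card_image_Icc (h : PivotalEnumeration Y Z W ι J) {a b : ℕ} (ha : 1 ≤ a) (hb : b < J) :
    #((Icc a b).image ι) = b + 1 - a := by
  have hsub : (Icc a b : Set ℕ) ⊆ Set.Ico 1 J := by
    intro k hk
    rw [coe_Icc] at hk
    exact ⟨ha.trans hk.1, hk.2.trans_lt hb⟩
  rw [card_image_of_injOn (h.injOn.mono hsub), Nat.card_Icc]

theorem W_pivot_eq_Z (h : PivotalEnumeration Y Z W ι J) : W J = Z (ι J) := by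
  obtain ⟨hJ, ℓ, hℓ, hℓJ, hιℓ⟩ := h.isLeast.1
  refine (h.eq_or_eq J hJ).resolve_left fun hY => ?_
  have := h.strictAntiOn (h.mem_Icc_of_le hℓ hℓJ.le) (h.mem_Icc_of_le h.one_lt.le le_rfl) hℓJ
  rw [h.W_eq_Y hℓ hℓJ, hιℓ, hY] at this
  exact lt_irrefl _ this

theorem Z_le_W_pivot (h : PivotalEnumeration Y Z W ι J) (i : Fin n) : Z i ≤ W J := by
  obtain ⟨k, hkmem, hk⟩ := h.exists_W_eq_Z i
  rcases lt_or_ge k J with hkJ | hJk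
  · exact absurd (h.W_eq_Y hkmem.1 hkJ ▸ hk) (h.Y_ne_Z _ _)
  · exact hk ▸ h.strictAntiOn.antitoneOn (h.mem_Icc_of_le h.one_lt.le le_rfl) hkmem hJk

theorem W_pivot_le_pick (h : PivotalEnumeration Y Z W ι J) (C : Fin n → Bool) :
    W J ≤ pick C Y Z (ι J) := by
  unfold pick
  split
  · exact h.W_pivot_eq_Z ▸ (h.Z_lt_Y _).le
  · exact h.W_pivot_eq_Z.le

theorem W_pivot_le_pick_swap (h : PivotalEnumeration Y Z W ι J) (C : Fin n → Bool) :
    W J ≤ pick C Z Y (ι J) := by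
  unfold pick
  split
  · exact h.W_pivot_eq_Z.le
  · exact h.W_pivot_eq_Z ▸ (h.Z_lt_Y _).le

theorem W_le_of_W_succ_lt (h : PivotalEnumeration Y Z W ι J) {j k : ℕ} (hj : 1 ≤ j)
    (hj2n : j + 1 ≤ 2 * n) (hk : k ∈ Set.Icc 1 (2 * n)) (hlt : W (j + 1) < W k) : W j ≤ W k := by
  have hkj := (h.strictAntiOn.lt_iff_gt ⟨by omega, hj2n⟩ hk).1 hlt
  exact h.strictAntiOn.antitoneOn hk ⟨hj, by omega⟩ (by omega)

theorem pick_swap_lt_W_one (h : PivotalEnumeration Y Z W ι J) {C : Fin n → Bool}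
    (hC : C (ι 1) = true) (i : Fin n) : pick C Z Y i < W 1 := by
  have h1 := h.mem_Icc_of_le le_rfl h.one_lt.le
  unfold pick
  split
  · exact (h.Z_le_W_pivot i).trans_lt
      (h.strictAntiOn h1 (h.mem_Icc_of_le h.one_lt.le le_rfl) h.one_lt)
  · next hCi =>
    obtain ⟨k, hk, hWk⟩ := h.exists_W_eq_Y i
    have hk1 : k ≠ 1 := by
      rintro rfl
      rw [h.W_eq_Y le_rfl h.one_lt] at hWk
      exact hCi (h.Y_injective hWk ▸ hC)
    exact hWk ▸ h.strictAntiOn h1 hk (lt_of_le_of_ne hk.1 (Ne.symm hk1))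

variable (hn : 0 < n) (π : Equiv.Perm (Fin n))

theorem finMax_lt_pick_of_head (h : PivotalEnumeration Y Z W ι J) {C : Fin n → Bool}
    (hC : C (ι 1) = true) : finMax hn (pick C Z Y) < pick C Y Z (ι 1) := by
  rw [finMax_lt_iff]
  intro i
  simpa [pick, hC, ← h.W_eq_Y le_rfl h.one_lt] using h.pick_swap_lt_W_one hC i

theorem finMax_lt_gamblerReward_of_head (h : PivotalEnumeration Y Z W ι J) {C : Fin n → Bool}
    (hC : C (ι 1) = true) :
    finMax hn (pick C Z Y) < gamblerReward hn π (pick C Y Z) (pick C Z Y) :=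
  finMax_lt_gamblerReward hn π (h.finMax_lt_pick_of_head hn hC)

theorem exists_W_eq_gamblerReward_of_head (h : PivotalEnumeration Y Z W ι J)
    {C : Fin n → Bool} (hC : C (ι 1) = true) :
    ∃ k ∈ Set.Icc 1 (2 * n), W k = gamblerReward hn π (pick C Y Z) (pick C Z Y) := by
  obtain ⟨i, hi⟩ := exists_gamblerReward_eq hn π (h.finMax_lt_pick_of_head hn hC)
  exact hi ▸ h.exists_W_eq_pick C i

theorem W_le_gamblerReward_of_W_succ_le (h : PivotalEnumeration Y Z W ι J) {j : ℕ} (hj : 1 ≤ j)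
    (hj2n : j + 1 ≤ 2 * n) {C : Fin n → Bool} (hC : C (ι 1) = true)
    (hT : W (j + 1) ≤ finMax hn (pick C Z Y)) :
    W j ≤ gamblerReward hn π (pick C Y Z) (pick C Z Y) := by
  obtain ⟨k, hk, hWk⟩ := h.exists_W_eq_gamblerReward_of_head hn π hC
  rw [← hWk]
  exact h.W_le_of_W_succ_lt hj hj2n hk
    (hWk ▸ hT.trans_lt (h.finMax_lt_gamblerReward_of_head hn π hC))

theorem W_le_finMax_of_tail (h : PivotalEnumeration Y Z W ι J) {C : Fin n → Bool} {k : ℕ}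
    (hk : 1 ≤ k) (hkJ : k < J) (hCk : C (ι k) = false) : W k ≤ finMax hn (pick C Z Y) := by
  simpa [pick, hCk, h.W_eq_Y hk hkJ] using le_finMax hn (pick C Z Y) (ι k)

theorem exists_head_of_W_le_finMax (h : PivotalEnumeration Y Z W ι J) {C : Fin n → Bool}
    {j : ℕ} (hj : 1 ≤ j) (hjJ : j < J) (hM : W j ≤ finMax hn (pick C Y Z)) :
    ∃ k ∈ Icc 1 j, C (ι k) = true := by
  have hjmem := h.mem_Icc_of_le hj hjJ.le
  obtain ⟨i, hi⟩ := exists_finMax_eq hn (pick C Y Z)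
  have hCi : C i = true := by
    by_contra hCi
    have hZ : W j ≤ Z i := by simpa [hi, pick, hCi] using hM
    exact (hZ.trans (h.Z_le_W_pivot i)).not_gt
      (h.strictAntiOn hjmem (h.mem_Icc_of_le h.one_lt.le le_rfl) hjJ)
  obtain ⟨k, hk, hWk⟩ := h.exists_W_eq_Y i
  have hkj : k ≤ j :=
    (h.strictAntiOn.le_iff_ge hjmem hk).1 (by simpa [hi, pick, hCi, hWk] using hM)
  have hιk : ι k = i := h.Y_injective ((h.W_eq_Y hk.1 (by omega)).symm.trans hWk)
  exact ⟨k, mem_Icc.2 ⟨hk.1, hkj⟩, hιk ▸ hCi⟩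

theorem finMax_mem_image (h : PivotalEnumeration Y Z W ι J) (C : Fin n → Bool) :
    finMax hn (pick C Y Z) ∈ (Icc 1 J).image W := by
  obtain ⟨i, hi⟩ := exists_finMax_eq hn (pick C Y Z)
  obtain ⟨k, hk, hWk⟩ := h.exists_W_eq_pick C i
  have hkJ : k ≤ J := (h.strictAntiOn.le_iff_ge (h.mem_Icc_of_le h.one_lt.le le_rfl) hk).1
    (by rw [hWk, ← hi]; exact (h.W_pivot_le_pick C).trans (le_finMax hn _ _))
  exact mem_image.2 ⟨k, mem_Icc.2 ⟨hk.1, hkJ⟩, hWk.trans hi.symm⟩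

theorem W_le_gamblerReward_of_tail (h : PivotalEnumeration Y Z W ι J) {j k : ℕ} (hj : 1 ≤ j)
    (hjJ : j + 1 < J) {C : Fin n → Bool} (hC : C (ι 1) = true) (hk : k ∈ Icc 1 (j + 1))
    (hCk : C (ι k) = false) : W j ≤ gamblerReward hn π (pick C Y Z) (pick C Z Y) := by
  obtain ⟨hk1, hkj⟩ := mem_Icc.1 hk
  refine h.W_le_gamblerReward_of_W_succ_le hn π hj (by linarith [h.le_two_mul]) hC ?_
  exact (h.strictAntiOn.antitoneOn (h.mem_Icc_of_le hk1 (by omega))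
    (h.mem_Icc_of_le (by omega) hjJ.le) hkj).trans (h.W_le_finMax_of_tail hn hk1 (by omega) hCk)

theorem W_le_gamblerReward_of_head (h : PivotalEnumeration Y Z W ι J) {j : ℕ} (hj : 1 ≤ j)
    (hjJ : j ≤ J) (hJj : J ≤ j + 1) {C : Fin n → Bool} (hC : C (ι 1) = true) :
    W j ≤ gamblerReward hn π (pick C Y Z) (pick C Z Y) := by
  have hT : W J ≤ finMax hn (pick C Z Y) := (h.W_pivot_le_pick_swap C).trans (le_finMax hn _ _)
  rcases hjJ.lt_or_eq with hjJ | rfl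
  · refine h.W_le_gamblerReward_of_W_succ_le hn π hj (by linarith [h.le_two_mul]) hC ?_
    rwa [show j + 1 = J by omega]
  · exact hT.trans (h.finMax_lt_gamblerReward_of_head hn π hC).le

theorem card_W_le_finMax_le_two_mul_card_W_le_gamblerReward (h : PivotalEnumeration Y Z W ι J)
    {j : ℕ} (hj : 1 ≤ j) (hjJ : j ≤ J) :
    #{C : Fin n → Bool | W j ≤ finMax hn (pick C Y Z)}
      ≤ 2 * #{C : Fin n → Bool | W j ≤ gamblerReward hn π (pick C Y Z) (pick C Z Y)} := by
  rcases lt_or_ge (j + 1) J with hlt | hge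
  · have hι1 : ι 1 ∉ (Icc 2 (j + 1)).image ι := by
      simp only [mem_image, mem_Icc, not_exists, not_and]
      rintro k ⟨hk, hkj⟩ hιk
      have := h.injOn ⟨by omega, by omega⟩ ⟨le_rfl, h.one_lt⟩ hιk
      omega
    calc #{C : Fin n → Bool | W j ≤ finMax hn (pick C Y Z)}
        ≤ #{C : Fin n → Bool | ∃ x ∈ (Icc 1 j).image ι, C x = true} := by
          refine card_le_card (monotone_filter_right _ fun C _ hC => ?_)
          simpa only [exists_mem_image] using h.exists_head_of_W_le_finMax hn hj (by omega) hC
      _ = 2 * #{C : Fin n → Bool |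
            C (ι 1) = true ∧ ∃ x ∈ (Icc 2 (j + 1)).image ι, C x = false} := by
          convert card_exists_true_eq_two_mul_card_true_and_exists_false hι1 ?_
          rw [h.card_image_Icc le_rfl (by omega), h.card_image_Icc (by omega) hlt]
          omega
      _ ≤ 2 * #{C : Fin n → Bool | W j ≤ gamblerReward hn π (pick C Y Z) (pick C Z Y)} := by
          refine Nat.mul_le_mul_left 2 (card_le_card (monotone_filter_right _ ?_))
          rintro C - ⟨hC, x, hx, hCx⟩
          obtain ⟨k, hk, rfl⟩ := mem_image.1 hx
          exact h.W_le_gamblerReward_of_tail hn π hj hlt hC (Icc_subset_Icc_left one_le_two hk) hCx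
  · have hhead := card_filter_forall_eq_mul_pow {ι 1} fun _ => true
    simp only [Fintype.card_bool, card_singleton, mem_singleton, forall_eq, pow_one,
      Fintype.card_fin] at hhead
    calc #{C : Fin n → Bool | W j ≤ finMax hn (pick C Y Z)}
        ≤ 2 ^ n := (card_filter_le univ _).trans_eq (by simp)
      _ = 2 * #{C : Fin n → Bool | C (ι 1) = true} := by omega
      _ ≤ 2 * #{C : Fin n → Bool | W j ≤ gamblerReward hn π (pick C Y Z) (pick C Z Y)} :=
          Nat.mul_le_mul_left 2 (card_le_card (monotone_filter_right _ fun C _ hC =>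
            h.W_le_gamblerReward_of_head hn π hj hjJ hge hC))

theorem sum_finMax_le_two_mul_sum_gamblerReward (h : PivotalEnumeration Y Z W ι J)
    (hZ : ∀ i, 0 ≤ Z i) :
    ∑ C : Fin n → Bool, finMax hn (pick C Y Z)
      ≤ 2 * ∑ C : Fin n → Bool, gamblerReward hn π (pick C Y Z) (pick C Z Y) := by
  have hJ : 0 ≤ W J := h.W_pivot_eq_Z ▸ hZ _
  refine sum_le_mul_sum_of_card_le_mul_card_of_mem ((Icc 1 J).image W) zero_le_two
    (fun C => hJ.trans ((h.W_pivot_le_pick C).trans (le_finMax hn _ _)))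
    (fun C => gamblerReward_nonneg hn π
      (hJ.trans ((h.W_pivot_le_pick_swap C).trans (le_finMax hn _ _))))
    (h.finMax_mem_image hn) ?_
  simp only [mem_image, mem_Icc]
  rintro _ ⟨j, ⟨hj, hjJ⟩, rfl⟩
  exact_mod_cast h.card_W_le_finMax_le_two_mul_card_W_le_gamblerReward hn π hj hjJ

end PivotalEnumeration

/-- **Pointwise half-prophet guarantee (Theorem 3.1, fixed values).** In the
setup of the single-sample analysis (fixed distinct values `Y i > Z i ≥ 0`),
for every arrival order `π`, the expected reward of the gambler over the `n`
independent fair coin flips `C` (with `X i = Y i`, `X̃ i = Z i` if `C i` is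
heads and `X i = Z i`, `X̃ i = Y i` otherwise, the gambler accepting the first
arriving `X` value exceeding `max_i X̃ i`) is at least half of the expected
value of `max_i X i` over the coin flips. -/
theorem gambler_half_of_prophet
    -- the `2n` values: `Y i > Z i ≥ 0` for each pair `i`, all distinct
    (n : ℕ) (hn : 0 < n) (Y Z : Fin n → ℝ)
    (hZnonneg : ∀ i, 0 ≤ Z i) (hYZ : ∀ i, Z i < Y i)
    (hdistinct : Function.Injective (Sum.elim Y Z))
    -- `W 1 > W 2 > … > W (2n)` is the decreasing relabeling of the `2n` values
    (W : ℕ → ℝ) (hWanti : StrictAntiOn W (Set.Icc 1 (2 * n)))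
    (hWrange : (Finset.Icc 1 (2 * n)).image W
      = Finset.univ.image Y ∪ Finset.univ.image Z)
    -- `ι j` is the index of the pair containing `W j`
    (ι : ℕ → Fin n)
    (hι : ∀ j ∈ Finset.Icc 1 (2 * n), W j = Y (ι j) ∨ W j = Z (ι j))
    -- `jstar` is the pivotal index: the least `j` whose pair index repeats an earlier one
    (jstar : ℕ)
    (hjstar : IsLeast {j : ℕ | j ∈ Finset.Icc 1 (2 * n)
      ∧ ∃ ℓ, 1 ≤ ℓ ∧ ℓ < j ∧ ι ℓ = ι j} jstar)
    (π : Equiv.Perm (Fin n)) :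
    (1 / 2 : ℝ) *
        ((∑ C : Fin n → Bool,
          finMax hn (fun i => if C i then Y i else Z i)) / 2 ^ n)
      ≤ (∑ C : Fin n → Bool,
          gamblerReward hn π (fun i => if C i then Y i else Z i)
            (fun i => if C i then Z i else Y i)) / 2 ^ n := by
  have h : PivotalEnumeration Y Z W ι jstar := ⟨hYZ, hdistinct, hWanti, hWrange, hι, hjstar⟩
  show 1 / 2 * ((∑ C : Fin n → Bool, finMax hn (pick C Y Z)) / 2 ^ n)
    ≤ (∑ C : Fin n → Bool, gamblerReward hn π (pick C Y Z) (pick C Z Y)) / 2 ^ n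
  rw [← mul_div_assoc, div_le_div_iff_of_pos_right (by positivity)]
  linarith [h.sum_finMax_le_two_mul_sum_gamblerReward hn π hZnonneg]
end
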